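/- arXiv:2512.20269 — 2 statements merged into one kernel-verified Lean document; each statement's English description precedes it below -/
import Mathlib

section
/- Let Q₁ ∈ ℝ^{m₁×m₁}, Q₂ ∈ ℝ^{m₂×m₂} be invertible matrices, Λ₁ ∈ ℝ^{m₁×m₁}, Λ₂ ∈ ℝ^{m₂×m₂} diagonal, M₁ = Q₁^{-⊤}Q₁^{-1}, M₂ = Q₂^{-⊤}Q₂^{-1}, K₁ = Q₁^{-⊤}Λ₁Q₁^{-1}, K₂ = Q₂^{-⊤}Λ₂Q₂^{-1}. If Λ₂ ⊗ I + I ⊗ Λ₁ is invertible, then the matrix A := K₁ ⊗ M₂ + M₁ ⊗ K₂ is invertible with A^{-1} = (Q₂ ⊗ Q₁)(Λ₂ ⊗ I + I ⊗ Λ₁)^{-1}(Q₂^⊤ ⊗ Q₁^⊤). -/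
open Matrix
open scoped Kronecker

/-! With `P = Q₂⁻¹ ⊗ Q₁⁻¹`, the mixed-product property gives `A = Pᵀ D P` for
`D = Λ₂ ⊗ I + I ⊗ Λ₁`, so `A` is invertible as soon as `D` is, and
`A⁻¹ = P⁻¹ D⁻¹ (Pᵀ)⁻¹` with `P⁻¹ = Q₂ ⊗ Q₁` and `(Pᵀ)⁻¹ = Q₂ᵀ ⊗ Q₁ᵀ`. -/

namespace Matrix

variable {R : Type*} {l₁ l₂ n₁ n₂ : Type*}

theorem transpose_mul_mul_kronecker_add_kronecker_transpose_mul_mul [CommSemiring R]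
    [Fintype l₁] [Fintype l₂] [DecidableEq l₁] [DecidableEq l₂]
    (P₁ : Matrix l₁ n₁ R) (P₂ : Matrix l₂ n₂ R) (L₁ : Matrix l₁ l₁ R) (L₂ : Matrix l₂ l₂ R) :
    (P₂ᵀ * L₂ * P₂) ⊗ₖ (P₁ᵀ * P₁) + (P₂ᵀ * P₂) ⊗ₖ (P₁ᵀ * L₁ * P₁)
      = (P₂ ⊗ₖ P₁)ᵀ * (L₂ ⊗ₖ (1 : Matrix l₁ l₁ R) + (1 : Matrix l₂ l₂ R) ⊗ₖ L₁) * (P₂ ⊗ₖ P₁) := by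
  rw [← kroneckerMap_transpose, Matrix.mul_add, Matrix.add_mul, ← mul_kronecker_mul,
    ← mul_kronecker_mul, ← mul_kronecker_mul, ← mul_kronecker_mul, Matrix.mul_one,
    Matrix.mul_one]

theorem isUnit_det_kronecker [CommRing R] [Fintype n₁] [Fintype n₂] [DecidableEq n₁]
    [DecidableEq n₂] {A : Matrix n₁ n₁ R} {B : Matrix n₂ n₂ R}
    (hA : IsUnit A.det) (hB : IsUnit B.det) : IsUnit (A ⊗ₖ B).det := by
  rw [det_kronecker]
  exact (hA.pow _).mul (hB.pow _)

variable {n : Type*} [CommRing R] [Fintype n] [DecidableEq n]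

theorem isUnit_det_transpose_mul_mul {P D : Matrix n n R} (hP : IsUnit P.det)
    (hD : IsUnit D.det) : IsUnit (Pᵀ * D * P).det := by
  rw [det_mul, det_mul, det_transpose]
  exact (hP.mul hD).mul hP

theorem inv_transpose_mul_mul (P D : Matrix n n R) : (Pᵀ * D * P)⁻¹ = P⁻¹ * D⁻¹ * P⁻¹ᵀ := by
  rw [mul_inv_rev, mul_inv_rev, transpose_nonsing_inv, Matrix.mul_assoc]

end Matrix

theorem stmt0_general {m₁ m₂ : ℕ}
    (Q₁ Λ₁ : Matrix (Fin m₁) (Fin m₁) ℝ) (Q₂ Λ₂ : Matrix (Fin m₂) (Fin m₂) ℝ)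
    (hQ₁ : IsUnit Q₁.det) (hQ₂ : IsUnit Q₂.det)
    (M₁ : Matrix (Fin m₁) (Fin m₁) ℝ) (hM₁ : M₁ = Q₁⁻¹ᵀ * Q₁⁻¹)
    (M₂ : Matrix (Fin m₂) (Fin m₂) ℝ) (hM₂ : M₂ = Q₂⁻¹ᵀ * Q₂⁻¹)
    (K₁ : Matrix (Fin m₁) (Fin m₁) ℝ) (hK₁ : K₁ = Q₁⁻¹ᵀ * Λ₁ * Q₁⁻¹)
    (K₂ : Matrix (Fin m₂) (Fin m₂) ℝ) (hK₂ : K₂ = Q₂⁻¹ᵀ * Λ₂ * Q₂⁻¹)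
    (hD : IsUnit (Λ₂ ⊗ₖ (1 : Matrix (Fin m₁) (Fin m₁) ℝ)
        + (1 : Matrix (Fin m₂) (Fin m₂) ℝ) ⊗ₖ Λ₁).det)
    (A : Matrix (Fin m₂ × Fin m₁) (Fin m₂ × Fin m₁) ℝ)
    (hA : A = K₂ ⊗ₖ M₁ + M₂ ⊗ₖ K₁) :
    IsUnit A.det ∧
      A⁻¹ = (Q₂ ⊗ₖ Q₁) *
        (Λ₂ ⊗ₖ (1 : Matrix (Fin m₁) (Fin m₁) ℝ)
          + (1 : Matrix (Fin m₂) (Fin m₂) ℝ) ⊗ₖ Λ₁)⁻¹ * (Q₂ᵀ ⊗ₖ Q₁ᵀ) := by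
  have hA_conj := transpose_mul_mul_kronecker_add_kronecker_transpose_mul_mul Q₁⁻¹ Q₂⁻¹ Λ₁ Λ₂
  rw [← hK₂, ← hM₁, ← hM₂, ← hK₁, ← hA] at hA_conj
  have hP_inv : (Q₂⁻¹ ⊗ₖ Q₁⁻¹)⁻¹ = Q₂ ⊗ₖ Q₁ := by
    rw [inv_kronecker, nonsing_inv_nonsing_inv _ hQ₂, nonsing_inv_nonsing_inv _ hQ₁]
  refine ⟨?_, ?_⟩
  · rw [hA_conj]
    exact isUnit_det_transpose_mul_mul
      (isUnit_det_kronecker (isUnit_nonsing_inv_det _ hQ₂) (isUnit_nonsing_inv_det _ hQ₁)) hD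
  · rw [hA_conj, inv_transpose_mul_mul, hP_inv, ← kroneckerMap_transpose]

/-- Fast Diagonalization: if `M_k = Q_k^{-T} Q_k^{-1}`, `K_k = Q_k^{-T} Λ_k Q_k^{-1}` with
`Λ_k` diagonal and `Λ₂ ⊗ I + I ⊗ Λ₁` invertible, then
`A = K₁ ⊗ M₂ + M₁ ⊗ K₂` is invertible with
`A⁻¹ = (Q₂ ⊗ Q₁)(Λ₂ ⊗ I + I ⊗ Λ₁)⁻¹(Q₂ᵀ ⊗ Q₁ᵀ)`. -/
theorem stmt0 {m₁ m₂ : ℕ}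
    (Q₁ Λ₁ : Matrix (Fin m₁) (Fin m₁) ℝ) (Q₂ Λ₂ : Matrix (Fin m₂) (Fin m₂) ℝ)
    (hQ₁ : IsUnit Q₁.det) (hQ₂ : IsUnit Q₂.det)
    (hΛ₁ : Λ₁.IsDiag) (hΛ₂ : Λ₂.IsDiag)
    (M₁ : Matrix (Fin m₁) (Fin m₁) ℝ) (hM₁ : M₁ = Q₁⁻¹ᵀ * Q₁⁻¹)
    (M₂ : Matrix (Fin m₂) (Fin m₂) ℝ) (hM₂ : M₂ = Q₂⁻¹ᵀ * Q₂⁻¹)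
    (K₁ : Matrix (Fin m₁) (Fin m₁) ℝ) (hK₁ : K₁ = Q₁⁻¹ᵀ * Λ₁ * Q₁⁻¹)
    (K₂ : Matrix (Fin m₂) (Fin m₂) ℝ) (hK₂ : K₂ = Q₂⁻¹ᵀ * Λ₂ * Q₂⁻¹)
    (hD : IsUnit (Λ₂ ⊗ₖ (1 : Matrix (Fin m₁) (Fin m₁) ℝ)
        + (1 : Matrix (Fin m₂) (Fin m₂) ℝ) ⊗ₖ Λ₁).det)
    (A : Matrix (Fin m₂ × Fin m₁) (Fin m₂ × Fin m₁) ℝ)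
    (hA : A = K₂ ⊗ₖ M₁ + M₂ ⊗ₖ K₁) :
    IsUnit A.det ∧
      A⁻¹ = (Q₂ ⊗ₖ Q₁) *
        (Λ₂ ⊗ₖ (1 : Matrix (Fin m₁) (Fin m₁) ℝ)
          + (1 : Matrix (Fin m₂) (Fin m₂) ℝ) ⊗ₖ Λ₁)⁻¹ * (Q₂ᵀ ⊗ₖ Q₁ᵀ) :=
  stmt0_general Q₁ Λ₁ Q₂ Λ₂ hQ₁ hQ₂ M₁ hM₁ M₂ hM₂ K₁ hK₁ K₂ hK₂ hD A hA
end

section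
/- Let A, P, K₁, K̃₁, K₂, K̃₂, M₁, M₂ be symmetric positive semidefinite real matrices with A = K₁ ⊗ M₂ + M₁ ⊗ K₂ and P = K̃₁ ⊗ M₂ + M₁ ⊗ K̃₂, where M₁, M₂ are positive definite. Suppose for k = 1,2 there are constants 0 < c_k ≤ C_k with c_k v^⊤ K̃_k v ≤ v^⊤ K_k v ≤ C_k v^⊤ K̃_k v for all v. Then for all vectors w, min(c₁,c₂) · w^⊤ P w ≤ w^⊤ A w ≤ max(C₁,C₂) · w^⊤ P w. -/
/-!
In the Loewner order the hypotheses read `c_k • K̃_k ≤ K_k ≤ C_k • K̃_k`. Tensoring with the positive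
semidefinite mass matrices preserves these bounds, so each summand of `A` is squeezed between
multiples of the corresponding summand of `P`; since both summands of `P` are positive semidefinite,
the two constants can be replaced by their minimum, resp. maximum.
-/

open Matrix
open scoped Kronecker MatrixOrder ComplexOrder

namespace Matrix

theorem sub_kronecker {α l m n p : Type*} [Ring α] (A₁ A₂ : Matrix l m α) (B : Matrix n p α) :
    (A₁ - A₂) ⊗ₖ B = A₁ ⊗ₖ B - A₂ ⊗ₖ B := by
  ext ⟨⟩ ⟨⟩
  simp [sub_mul]

theorem kronecker_sub {α l m n p : Type*} [Ring α] (A : Matrix l m α) (B₁ B₂ : Matrix n p α) :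
    A ⊗ₖ (B₁ - B₂) = A ⊗ₖ B₁ - A ⊗ₖ B₂ := by
  ext ⟨⟩ ⟨⟩
  simp [mul_sub]

section Loewner

variable {𝕜 : Type*} [RCLike 𝕜] {m n : Type*}

theorem kronecker_le_kronecker_right [Finite m] [Finite n] {X Y : Matrix m m 𝕜} (hXY : X ≤ Y)
    {Z : Matrix n n 𝕜} (hZ : Z.PosSemidef) : X ⊗ₖ Z ≤ Y ⊗ₖ Z := by
  rw [le_iff, ← sub_kronecker]
  exact (le_iff.mp hXY).kronecker hZ

theorem kronecker_le_kronecker_left [Finite m] [Finite n] {X Y : Matrix n n 𝕜} (hXY : X ≤ Y)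
    {Z : Matrix m m 𝕜} (hZ : Z.PosSemidef) : Z ⊗ₖ X ≤ Z ⊗ₖ Y := by
  rw [le_iff, ← kronecker_sub]
  exact hZ.kronecker (le_iff.mp hXY)

theorem PosSemidef.smul_le_smul {X : Matrix n n 𝕜} (hX : X.PosSemidef) {a b : ℝ} (hab : a ≤ b) :
    a • X ≤ b • X := by
  rw [le_iff, ← sub_smul]
  exact hX.smul (sub_nonneg.mpr hab)

theorem min_smul_add_le {a b : ℝ} {X₁ X₂ Y₁ Y₂ : Matrix n n 𝕜} (hX₁ : X₁.PosSemidef)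
    (hX₂ : X₂.PosSemidef) (h₁ : a • X₁ ≤ Y₁) (h₂ : b • X₂ ≤ Y₂) :
    min a b • (X₁ + X₂) ≤ Y₁ + Y₂ := by
  rw [smul_add]
  exact add_le_add ((hX₁.smul_le_smul (min_le_left a b)).trans h₁)
    ((hX₂.smul_le_smul (min_le_right a b)).trans h₂)

theorem add_le_max_smul {a b : ℝ} {X₁ X₂ Y₁ Y₂ : Matrix n n 𝕜} (hX₁ : X₁.PosSemidef)
    (hX₂ : X₂.PosSemidef) (h₁ : Y₁ ≤ a • X₁) (h₂ : Y₂ ≤ b • X₂) :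
    Y₁ + Y₂ ≤ max a b • (X₁ + X₂) := by
  rw [smul_add]
  exact add_le_add (h₁.trans (hX₁.smul_le_smul (le_max_left a b)))
    (h₂.trans (hX₂.smul_le_smul (le_max_right a b)))

end Loewner

section Real

variable {n : Type*} [Fintype n]

theorem dotProduct_mulVec_le_of_le {X Y : Matrix n n ℝ} (hXY : X ≤ Y) (v : n → ℝ) :
    v ⬝ᵥ (X *ᵥ v) ≤ v ⬝ᵥ (Y *ᵥ v) := by
  have := (le_iff.mp hXY).dotProduct_mulVec_nonneg v
  rwa [star_trivial, sub_mulVec, dotProduct_sub, sub_nonneg] at this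

theorem le_of_dotProduct_mulVec_le {X Y : Matrix n n ℝ} (hX : X.IsHermitian)
    (hY : Y.IsHermitian) (h : ∀ v, v ⬝ᵥ (X *ᵥ v) ≤ v ⬝ᵥ (Y *ᵥ v)) : X ≤ Y :=
  .of_dotProduct_mulVec_nonneg (hY.sub hX) fun v => by
    rw [star_trivial, sub_mulVec, dotProduct_sub, sub_nonneg]
    exact h v

theorem smul_le_and_le_smul_of_dotProduct_mulVec {K Kt : Matrix n n ℝ} (hK : K.IsHermitian)
    (hKt : Kt.IsHermitian) {c C : ℝ}
    (h : ∀ v : n → ℝ,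
      c * (v ⬝ᵥ (Kt *ᵥ v)) ≤ v ⬝ᵥ (K *ᵥ v) ∧ v ⬝ᵥ (K *ᵥ v) ≤ C * (v ⬝ᵥ (Kt *ᵥ v))) :
    c • Kt ≤ K ∧ K ≤ C • Kt := by
  simp only [← smul_eq_mul, ← dotProduct_smul, ← smul_mulVec] at h
  exact ⟨le_of_dotProduct_mulVec_le (hKt.smul rfl) hK fun v => (h v).1,
    le_of_dotProduct_mulVec_le hK (hKt.smul rfl) fun v => (h v).2⟩

end Real

end Matrix

theorem stmt2_general {m₁ m₂ : ℕ}
    (K₁ Kt₁ M₁ : Matrix (Fin m₁) (Fin m₁) ℝ) (K₂ Kt₂ M₂ : Matrix (Fin m₂) (Fin m₂) ℝ)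
    (hK₁ : K₁.PosSemidef) (hKt₁ : Kt₁.PosSemidef) (hK₂ : K₂.PosSemidef)
    (hKt₂ : Kt₂.PosSemidef) (hM₁ : M₁.PosDef) (hM₂ : M₂.PosDef)
    (A P : Matrix (Fin m₁ × Fin m₂) (Fin m₁ × Fin m₂) ℝ)
    (hA : A = K₁ ⊗ₖ M₂ + M₁ ⊗ₖ K₂) (hP : P = Kt₁ ⊗ₖ M₂ + M₁ ⊗ₖ Kt₂)
    (c₁ C₁ c₂ C₂ : ℝ)
    (h₁ : ∀ v : Fin m₁ → ℝ,
      c₁ * (v ⬝ᵥ (Kt₁ *ᵥ v)) ≤ v ⬝ᵥ (K₁ *ᵥ v) ∧ v ⬝ᵥ (K₁ *ᵥ v) ≤ C₁ * (v ⬝ᵥ (Kt₁ *ᵥ v)))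
    (h₂ : ∀ v : Fin m₂ → ℝ,
      c₂ * (v ⬝ᵥ (Kt₂ *ᵥ v)) ≤ v ⬝ᵥ (K₂ *ᵥ v) ∧ v ⬝ᵥ (K₂ *ᵥ v) ≤ C₂ * (v ⬝ᵥ (Kt₂ *ᵥ v))) :
    ∀ w : Fin m₁ × Fin m₂ → ℝ,
      min c₁ c₂ * (w ⬝ᵥ (P *ᵥ w)) ≤ w ⬝ᵥ (A *ᵥ w) ∧
        w ⬝ᵥ (A *ᵥ w) ≤ max C₁ C₂ * (w ⬝ᵥ (P *ᵥ w)) := by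
  obtain ⟨lo₁, hi₁⟩ := smul_le_and_le_smul_of_dotProduct_mulVec hK₁.1 hKt₁.1 h₁
  obtain ⟨lo₂, hi₂⟩ := smul_le_and_le_smul_of_dotProduct_mulVec hK₂.1 hKt₂.1 h₂
  have hP₁ := hKt₁.kronecker hM₂.posSemidef
  have hP₂ := hM₁.posSemidef.kronecker hKt₂
  have lower : min c₁ c₂ • P ≤ A := by
    rw [hA, hP]
    refine min_smul_add_le hP₁ hP₂ ?_ ?_
    · simpa only [smul_kronecker] using kronecker_le_kronecker_right lo₁ hM₂.posSemidef
    · simpa only [kronecker_smul] using kronecker_le_kronecker_left lo₂ hM₁.posSemidef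
  have upper : A ≤ max C₁ C₂ • P := by
    rw [hA, hP]
    refine add_le_max_smul hP₁ hP₂ ?_ ?_
    · simpa only [smul_kronecker] using kronecker_le_kronecker_right hi₁ hM₂.posSemidef
    · simpa only [kronecker_smul] using kronecker_le_kronecker_left hi₂ hM₁.posSemidef
  intro w
  have hlo := dotProduct_mulVec_le_of_le lower w
  have hhi := dotProduct_mulVec_le_of_le upper w
  rw [smul_mulVec, dotProduct_smul, smul_eq_mul] at hlo hhi
  exact ⟨hlo, hhi⟩

/-- Spectral equivalence of `A = K₁ ⊗ M₂ + M₁ ⊗ K₂` and `P = K̃₁ ⊗ M₂ + M₁ ⊗ K̃₂` under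
two-sided Loewner bounds relating `K_k` and `K̃_k`. -/
theorem stmt2 {m₁ m₂ : ℕ}
    (K₁ Kt₁ M₁ : Matrix (Fin m₁) (Fin m₁) ℝ) (K₂ Kt₂ M₂ : Matrix (Fin m₂) (Fin m₂) ℝ)
    (hK₁ : K₁.PosSemidef) (hKt₁ : Kt₁.PosSemidef) (hK₂ : K₂.PosSemidef)
    (hKt₂ : Kt₂.PosSemidef) (hM₁ : M₁.PosDef) (hM₂ : M₂.PosDef)
    (A P : Matrix (Fin m₁ × Fin m₂) (Fin m₁ × Fin m₂) ℝ)
    (hA : A = K₁ ⊗ₖ M₂ + M₁ ⊗ₖ K₂) (hP : P = Kt₁ ⊗ₖ M₂ + M₁ ⊗ₖ Kt₂)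
    (hAsym : A.IsSymm) (hPsym : P.IsSymm) (hApsd : A.PosSemidef) (hPpsd : P.PosSemidef)
    (c₁ C₁ c₂ C₂ : ℝ) (hc₁ : 0 < c₁) (hc₂ : 0 < c₂) (hcC₁ : c₁ ≤ C₁) (hcC₂ : c₂ ≤ C₂)
    (h₁ : ∀ v : Fin m₁ → ℝ,
      c₁ * (v ⬝ᵥ (Kt₁ *ᵥ v)) ≤ v ⬝ᵥ (K₁ *ᵥ v) ∧ v ⬝ᵥ (K₁ *ᵥ v) ≤ C₁ * (v ⬝ᵥ (Kt₁ *ᵥ v)))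
    (h₂ : ∀ v : Fin m₂ → ℝ,
      c₂ * (v ⬝ᵥ (Kt₂ *ᵥ v)) ≤ v ⬝ᵥ (K₂ *ᵥ v) ∧ v ⬝ᵥ (K₂ *ᵥ v) ≤ C₂ * (v ⬝ᵥ (Kt₂ *ᵥ v))) :
    ∀ w : Fin m₁ × Fin m₂ → ℝ,
      min c₁ c₂ * (w ⬝ᵥ (P *ᵥ w)) ≤ w ⬝ᵥ (A *ᵥ w) ∧
        w ⬝ᵥ (A *ᵥ w) ≤ max C₁ C₂ * (w ⬝ᵥ (P *ᵥ w)) :=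
  stmt2_general K₁ Kt₁ M₁ K₂ Kt₂ M₂ hK₁ hKt₁ hK₂ hKt₂ hM₁ hM₂ A P hA hP c₁ C₁ c₂ C₂ h₁ h₂
end
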